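/- arXiv:2101.11586 — 4 statements merged into one kernel-verified Lean document; each statement's English description precedes it below -/
import Mathlib

section
/- Let A be a nil associative k-algebra and G = 1 + A the associated algebra group, acting on A by (g,h)·a = g a h⁻¹ for g,h ∈ G. Then the set A_fsc of elements of A whose orbit under G × G is finite is a subalgebra of A: it is closed under scalar multiplication, addition, and multiplication. -/
open Pointwise

/-- The algebra group `G = 1 + A` inside the ambient unital algebra `R`. -/
def algGroup (k R : Type*) [Field k] [Ring R] [Algebra k R]
    (A : NonUnitalSubalgebra k R) : Set R :=
  {x : R | ∃ a ∈ A, x = 1 + a}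

/-- The orbit `Γ·a = {g a h⁻¹ : g, h ∈ G}` of `a` under `Γ = G × G`. -/
def gammaOrbit (k R : Type*) [Field k] [Ring R] [Algebra k R]
    (A : NonUnitalSubalgebra k R) (a : R) : Set R :=
  {x : R | ∃ g ∈ algGroup k R A, ∃ h ∈ algGroup k R A, x = g * a * Ring.inverse h}

/-- the set `A_fsc` of elements of `A` with finite `Γ`-orbit is a
subalgebra: closed under scalar multiplication, addition and multiplication. -/
theorem stmt_1 (k R : Type*) [Field k] [Ring R] [Algebra k R]
    (A : NonUnitalSubalgebra k R) (hnil : ∀ a ∈ A, IsNilpotent a)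
    (c : k) (a b : R) (ha : a ∈ A) (hb : b ∈ A)
    (hfa : (gammaOrbit k R A a).Finite) (hfb : (gammaOrbit k R A b).Finite) :
    (c • a ∈ A ∧ (gammaOrbit k R A (c • a)).Finite) ∧
    (a + b ∈ A ∧ (gammaOrbit k R A (a + b)).Finite) ∧
    (a * b ∈ A ∧ (gammaOrbit k R A (a * b)).Finite) := by
  refine ⟨⟨A.smul_mem c ha, ?_⟩, ⟨A.add_mem ha hb, ?_⟩, ⟨A.mul_mem ha hb, ?_⟩⟩
  · refine (hfa.image (c • ·)).subset ?_
    rintro x ⟨g, hg, h, hh, rfl⟩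
    exact ⟨g * a * Ring.inverse h, ⟨g, hg, h, hh, rfl⟩, by
      simp [mul_smul_comm, smul_mul_assoc]⟩
  · refine (hfa.add hfb).subset ?_
    rintro x ⟨g, hg, h, hh, rfl⟩
    rw [mul_add, add_mul]
    exact Set.add_mem_add ⟨g, hg, h, hh, rfl⟩ ⟨g, hg, h, hh, rfl⟩
  · refine (hfa.mul hfb).subset ?_
    rintro x ⟨g, hg, h, hh, rfl⟩
    obtain ⟨h', hh', rfl⟩ := hh
    have hu : IsUnit (1 + h') := (hnil h' hh').isUnit_one_add
    have key : g * (a * b) * Ring.inverse (1 + h')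
        = (g * a * Ring.inverse (1 + h')) * ((1 + h') * b * Ring.inverse (1 + h')) := by
      have h1 : Ring.inverse (1 + h') * (1 + h') = 1 := Ring.inverse_mul_cancel _ hu
      rw [show a * b = a * (Ring.inverse (1 + h') * (1 + h')) * b from by rw [h1, mul_one]]
      noncomm_ring
    rw [key]
    exact Set.mul_mem_mul ⟨g, hg, 1 + h', ⟨h', hh', rfl⟩, rfl⟩
      ⟨1 + h', ⟨h', hh', rfl⟩, 1 + h', ⟨h', hh', rfl⟩, rfl⟩
end

section
/- Let G = 1+A be an algebra group over a field k (A a nil k-algebra), and let A_fsc ⊆ A be the subalgebra of elements with finite Γ-orbit, where Γ = G × G acts by (g,h)·a = gah⁻¹. Then G_fsc = 1 + A_fsc is a normal subgroup of G, and it equals the set of elements of G lying in a finite superclass (where the superclass of 1+a is 1 + Γ·a). -/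
/-- The superclass of `x = 1 + a`, namely `1 + G a G` where `a = x - 1`. -/
def superclass (k R : Type*) [Field k] [Ring R] [Algebra k R]
    (A : NonUnitalSubalgebra k R) (x : R) : Set R :=
  {y : R | ∃ g ∈ algGroup k R A, ∃ h ∈ algGroup k R A, y = 1 + g * (x - 1) * h}

/-- `G_fsc = 1 + A_fsc`, where `A_fsc` is the set of elements of `A` with
finite `Γ`-orbit. -/
def algGroupFsc (k R : Type*) [Field k] [Ring R] [Algebra k R]
    (A : NonUnitalSubalgebra k R) : Set R :=
  {x : R | ∃ a ∈ A, (gammaOrbit k R A a).Finite ∧ x = 1 + a}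

/-- Auxiliary: the `G × G` orbit written without `Ring.inverse`. -/
def orbitAux (k R : Type*) [Field k] [Ring R] [Algebra k R]
    (A : NonUnitalSubalgebra k R) (a : R) : Set R :=
  {x : R | ∃ g ∈ algGroup k R A, ∃ h ∈ algGroup k R A, x = g * a * h}

section Aux
variable {k R : Type*} [Field k] [Ring R] [Algebra k R] {A : NonUnitalSubalgebra k R}

local notation "G" => algGroup k R A

lemma aux_one_mem : (1 : R) ∈ G := ⟨0, zero_mem _, by simp⟩

lemma aux_sub_mem {x : R} (hx : x ∈ G) : x - 1 ∈ A := by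
  obtain ⟨a, ha, rfl⟩ := hx; simpa using ha

lemma aux_mul_mem {x y : R} (hx : x ∈ G) (hy : y ∈ G) : x * y ∈ G := by
  obtain ⟨a, ha, rfl⟩ := hx; obtain ⟨b, hb, rfl⟩ := hy
  exact ⟨a + b + a * b, add_mem (add_mem ha hb) (mul_mem ha hb), by noncomm_ring⟩

lemma aux_sandwich {g h a : R} (hg : g ∈ G) (hh : h ∈ G) (ha : a ∈ A) :
    g * a * h ∈ A := by
  obtain ⟨u, hu, rfl⟩ := hg; obtain ⟨v, hv, rfl⟩ := hh
  have e : (1 + u) * a * (1 + v) = a + (u * a + (a * v + u * a * v)) := by noncomm_ring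
  rw [e]
  exact add_mem ha (add_mem (mul_mem hu ha) (add_mem (mul_mem ha hv) (mul_mem (mul_mem hu ha) hv)))

/-- Key: inverse of `1+a` exists and lies in `1+A`. -/
lemma aux_inv_core {a : R} (ha : a ∈ A) (hn : IsNilpotent a) :
    ∃ b ∈ A, (1 + a) * (1 + b) = 1 ∧ (1 + b) * (1 + a) = 1 := by
  obtain ⟨n, hn⟩ := hn
  have hmem : ∀ i : ℕ, (-a) ^ (i + 1) ∈ A := by
    intro i
    induction i with
    | zero => simpa using neg_mem ha
    | succ j ih => rw [pow_succ]; exact mul_mem ih (neg_mem ha)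
  have hs : (1 : R) + ∑ i ∈ Finset.range n, (-a) ^ (i + 1)
      = ∑ i ∈ Finset.range (n + 1), (-a) ^ i := by
    rw [Finset.sum_range_succ' (fun i => (-a) ^ i) n]
    simp [add_comm]
  have hz : (-a) ^ (n + 1) = 0 := by
    rw [neg_pow, pow_succ a n, hn]; simp
  have hne : (-(1 + a) : R) = -a - 1 := by abel
  refine ⟨∑ i ∈ Finset.range n, (-a) ^ (i + 1),
    sum_mem (fun i _ => hmem i), ?_, ?_⟩
  · have h1 := mul_geom_sum (-a) (n + 1)
    rw [hz] at h1
    apply neg_injective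
    rw [← neg_mul, hne, hs, h1]
    simp
  · have h1 := geom_sum_mul (-a) (n + 1)
    rw [hz] at h1
    apply neg_injective
    rw [← mul_neg, hne, hs, h1]
    simp

lemma aux_inv (hnil : ∀ a ∈ A, IsNilpotent a) {x : R} (hx : x ∈ G) :
    Ring.inverse x ∈ G ∧ x * Ring.inverse x = 1 ∧ Ring.inverse x * x = 1 := by
  obtain ⟨a, ha, rfl⟩ := hx
  obtain ⟨b, hb, h1, h2⟩ := aux_inv_core ha (hnil a ha)
  have hu : Ring.inverse (1 + a) = 1 + b := by
    have := Ring.inverse_unit (⟨1 + a, 1 + b, h1, h2⟩ : Rˣ)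
    simpa using this
  rw [hu]
  exact ⟨⟨b, hb, rfl⟩, h1, h2⟩

lemma aux_inv_inv (hnil : ∀ a ∈ A, IsNilpotent a) {x : R} (hx : x ∈ G) :
    Ring.inverse (Ring.inverse x) = x := by
  obtain ⟨hmem, h1, h2⟩ := aux_inv hnil hx
  have := Ring.inverse_unit (⟨Ring.inverse x, x, h2, h1⟩ : Rˣ)
  simpa using this

lemma aux_orbit_eq (hnil : ∀ a ∈ A, IsNilpotent a) (a : R) :
    gammaOrbit k R A a = orbitAux k R A a := by
  ext x
  constructor
  · rintro ⟨g, hg, h, hh, rfl⟩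
    exact ⟨g, hg, Ring.inverse h, (aux_inv hnil hh).1, rfl⟩
  · rintro ⟨g, hg, h, hh, rfl⟩
    exact ⟨g, hg, Ring.inverse h, (aux_inv hnil hh).1, by rw [aux_inv_inv hnil hh]⟩

lemma aux_self_mem_orbit (a : R) : a ∈ orbitAux k R A a :=
  ⟨1, aux_one_mem, 1, aux_one_mem, by simp⟩

lemma aux_fin_mul {a b : R} (hb : b ∈ A)
    (hfa : (orbitAux k R A a).Finite) (hfb : (orbitAux k R A b).Finite) :
    (orbitAux k R A (a + b + a * b)).Finite := by
  apply (hfa.image2 (· + ·) hfb).subset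
  rintro x ⟨g, hg, h, hh, rfl⟩
  refine ⟨g * a * ((1 + b) * h), ⟨g, hg, (1 + b) * h,
    aux_mul_mem ⟨b, hb, rfl⟩ hh, rfl⟩, g * b * h, ⟨g, hg, h, hh, rfl⟩, ?_⟩
  show g * a * ((1 + b) * h) + g * b * h = g * (a + b + a * b) * h
  noncomm_ring

lemma aux_fin_neg_mul {a b : R} (hb : b ∈ A) (h1 : (1 + a) * (1 + b) = 1)
    (hfa : (orbitAux k R A a).Finite) : (orbitAux k R A b).Finite := by
  have hb2 : b = -(a * (1 + b)) := by
    have e : (1 + a) * (1 + b) = b + a * (1 + b) + 1 := by noncomm_ring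
    rw [e] at h1
    exact eq_neg_of_add_eq_zero_left (add_right_cancel (h1.trans (zero_add 1).symm))
  apply (hfa.image Neg.neg).subset
  rintro x ⟨g, hg, h, hh, rfl⟩
  refine ⟨g * a * ((1 + b) * h), ⟨g, hg, (1 + b) * h,
    aux_mul_mem ⟨b, hb, rfl⟩ hh, rfl⟩, ?_⟩
  show -(g * a * ((1 + b) * h)) = g * b * h
  conv_rhs => rw [hb2]
  noncomm_ring

end Aux

/-- `G_fsc = 1 + A_fsc` is a normal subgroup of `G`, and it equals
the set of elements of `G` lying in a finite superclass. -/
theorem stmt_4 (k R : Type*) [Field k] [Ring R] [Algebra k R]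
    (A : NonUnitalSubalgebra k R) (hnil : ∀ a ∈ A, IsNilpotent a) :
    algGroupFsc k R A ⊆ algGroup k R A ∧
    (1 : R) ∈ algGroupFsc k R A ∧
    (∀ x ∈ algGroupFsc k R A, ∀ y ∈ algGroupFsc k R A, x * y ∈ algGroupFsc k R A) ∧
    (∀ x ∈ algGroupFsc k R A, Ring.inverse x ∈ algGroupFsc k R A) ∧
    (∀ g ∈ algGroup k R A, ∀ x ∈ algGroupFsc k R A,
        g * x * Ring.inverse g ∈ algGroupFsc k R A) ∧
    algGroupFsc k R A = {x ∈ algGroup k R A | (superclass k R A x).Finite} := by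
  refine ⟨?_, ?_, ?_, ?_, ?_, ?_⟩
  · rintro x ⟨a, ha, -, rfl⟩
    exact ⟨a, ha, rfl⟩
  · refine ⟨0, zero_mem _, ?_, by simp⟩
    apply (Set.finite_singleton (0 : R)).subset
    rintro x ⟨g, hg, h, hh, rfl⟩
    simp
  · rintro x ⟨a, ha, hfa, rfl⟩ y ⟨b, hb, hfb, rfl⟩
    rw [aux_orbit_eq hnil] at hfa hfb
    refine ⟨a + b + a * b, add_mem (add_mem ha hb) (mul_mem ha hb), ?_, by noncomm_ring⟩
    rw [aux_orbit_eq hnil]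
    exact aux_fin_mul hb hfa hfb
  · rintro x ⟨a, ha, hfa, rfl⟩
    rw [aux_orbit_eq hnil] at hfa
    obtain ⟨b, hb, h1, h2⟩ := aux_inv_core ha (hnil a ha)
    have hu : Ring.inverse (1 + a) = 1 + b := by
      have := Ring.inverse_unit (⟨1 + a, 1 + b, h1, h2⟩ : Rˣ)
      simpa using this
    rw [hu]
    refine ⟨b, hb, ?_, rfl⟩
    rw [aux_orbit_eq hnil]
    exact aux_fin_neg_mul hb h1 hfa
  · rintro g hg x ⟨a, ha, hfa, rfl⟩
    rw [aux_orbit_eq hnil] at hfa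
    obtain ⟨hginv, hgi1, hgi2⟩ := aux_inv hnil hg
    have he : g * (1 + a) * Ring.inverse g = 1 + g * a * Ring.inverse g := by
      rw [mul_add, mul_one, add_mul, hgi1]
    rw [he]
    refine ⟨g * a * Ring.inverse g, aux_sandwich hg hginv ha, ?_, rfl⟩
    rw [aux_orbit_eq hnil]
    apply hfa.subset
    rintro x ⟨g', hg', h, hh, rfl⟩
    refine ⟨g' * g, aux_mul_mem hg' hg, Ring.inverse g * h, aux_mul_mem hginv hh, ?_⟩
    show g' * (g * a * Ring.inverse g) * h = g' * g * a * (Ring.inverse g * h)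
    noncomm_ring
  · ext x
    constructor
    · rintro ⟨a, ha, hfa, rfl⟩
      rw [aux_orbit_eq hnil] at hfa
      refine ⟨⟨a, ha, rfl⟩, ?_⟩
      apply ((hfa.image (fun y => 1 + y))).subset
      rintro y ⟨g, hg, h, hh, rfl⟩
      exact ⟨g * ((1 + a) - 1) * h, ⟨g, hg, h, hh, by simp⟩, by simp⟩
    · rintro ⟨⟨a, ha, rfl⟩, hfin⟩
      refine ⟨a, ha, ?_, rfl⟩
      rw [aux_orbit_eq hnil]
      apply (hfin.image (fun y => y - 1)).subset
      rintro y ⟨g, hg, h, hh, rfl⟩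
      exact ⟨1 + g * a * h, ⟨g, hg, h, hh, by simp⟩, by simp⟩
end

section
/- Let G be a compact abelian group with normalized Haar measure η, and Γ a group of continuous automorphisms of G. If the Haar measure η is ergodic with respect to the Γ-action, then every nontrivial character ϑ in the Pontryagin dual G° has an infinite Γ-orbit (under the contragradient action γ·ϑ = ϑ ∘ γ⁻¹). -/
/-!
If the orbit of a nontrivial character `ϑ` were finite, the sum `f` of the characters in it would
be a continuous `Γ`-invariant function. By ergodicity, a nonempty open invariant set has full
measure (Haar measure charges open sets), so two disjoint ones cannot exist and `f` is constant.
But the trivial character is not in the orbit, so `f = c · 1` would be a nontrivial linear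
relation between distinct characters, contradicting Dedekind's independence of characters.
-/

open MeasureTheory
open scoped ENNReal

theorem MulAction.sum_orbit_smul {H α M : Type*} [Group H] [MulAction H α] [AddCommMonoid M]
    {x : α} (hfin : (orbit H x).Finite) (F : α → M) (h : H) :
    ∑ y ∈ hfin.toFinset, F (h • y) = ∑ y ∈ hfin.toFinset, F y :=
  Finset.sum_equiv (MulAction.toPerm h)
    (fun y => by simp only [Set.Finite.mem_toFinset, toPerm_apply, ← orbit_eq_iff, orbit_smul])
    (fun _ _ => rfl)

theorem MonoidHom.sum_ne_const {G K : Type*} [MulOneClass G] [CommRing K] [IsDomain K]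
    {T : Finset (G →* K)} (hT : T.Nonempty) (h1 : 1 ∉ T) (c : K) :
    (fun g => ∑ ψ ∈ T, ψ g) ≠ fun _ => c := by
  classical
  intro hsum
  rw [← Finset.sum_fn] at hsum
  obtain ⟨ψ, hψ⟩ := hT
  have hrel : ∑ χ ∈ insert 1 T, (if χ = 1 then -c else 1) • (χ : G → K) = 0 := by
    rw [Finset.sum_insert h1, Finset.sum_congr rfl fun χ hχ => by
      rw [if_neg (ne_of_mem_of_not_mem hχ h1), one_smul], hsum]
    ext; simp
  have := linearIndependent_iff'.1 (linearIndependent_monoidHom G K) _ _ hrel ψ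
    (Finset.mem_insert_of_mem hψ)
  simp [ne_of_mem_of_not_mem hψ h1] at this

section Ergodic

variable {Γ X : Type*} [SMul Γ X] [TopologicalSpace X] [MeasurableSpace X]
  [OpensMeasurableSpace X] {μ : Measure X} [μ.IsOpenPosMeasure]

theorem measure_eq_one_of_isOpen_of_smul_preimage_eq
    (herg : ∀ B : Set X, MeasurableSet B →
      (∀ γ : Γ, (fun x : X => γ • x) ⁻¹' B = B) → μ B = 0 ∨ μ B = 1)
    {U : Set X} (hU : IsOpen U) (hne : U.Nonempty)
    (hinv : ∀ γ : Γ, (fun x : X => γ • x) ⁻¹' U = U) : μ U = 1 :=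
  (herg U hU.measurableSet hinv).resolve_left (hU.measure_ne_zero μ hne)

theorem eq_of_continuous_of_smul_invariant [IsProbabilityMeasure μ]
    {Y : Type*} [TopologicalSpace Y] [T2Space Y]
    (herg : ∀ B : Set X, MeasurableSet B →
      (∀ γ : Γ, (fun x : X => γ • x) ⁻¹' B = B) → μ B = 0 ∨ μ B = 1)
    {f : X → Y} (hf : Continuous f) (hinv : ∀ (γ : Γ) (x : X), f (γ • x) = f x) (a b : X) :
    f a = f b := by
  by_contra hab
  obtain ⟨u, v, hu, hv, hau, hbv, huv⟩ := t2_separation hab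
  have hpre : ∀ w : Set Y, ∀ γ : Γ, (fun x : X => γ • x) ⁻¹' (f ⁻¹' w) = f ⁻¹' w :=
    fun w γ => by ext x; simp [hinv γ x]
  have hU := measure_eq_one_of_isOpen_of_smul_preimage_eq herg (hu.preimage hf) ⟨a, hau⟩ (hpre u)
  have hV := measure_eq_one_of_isOpen_of_smul_preimage_eq herg (hv.preimage hf) ⟨b, hbv⟩ (hpre v)
  have h2 : μ (f ⁻¹' u ∪ f ⁻¹' v) = 2 := by
    rw [measure_union (huv.preimage f) (hv.preimage hf).measurableSet, hU, hV, one_add_one_eq_two]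
  have : (2 : ℝ≥0∞) ≤ 1 := h2 ▸ prob_le_one
  norm_num at this

end Ergodic

theorem stmt_8_general (G : Type*) [CommGroup G] [TopologicalSpace G]
    [MeasurableSpace G] [BorelSpace G]
    (η : Measure G) [η.IsHaarMeasure] [IsProbabilityMeasure η]
    (Γ : Type*) [Group Γ] [MulDistribMulAction Γ G]
    (hcont : ∀ γ : Γ, Continuous (fun g : G => γ • g))
    (herg : ∀ B : Set G, MeasurableSet B →
      (∀ γ : Γ, (fun g : G => γ • g) ⁻¹' B = B) → η B = 0 ∨ η B = 1)
    (ϑ : G →* ℂ) (hϑ : Continuous ϑ)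
    (hnt : ∃ g : G, ϑ g ≠ 1) :
    (Set.range (fun γ : Γ => fun g : G => ϑ (γ⁻¹ • g))).Infinite := by
  intro hfin
  -- `Γᵈᵐᵃ` acts on characters by `(mk γ • ψ) g = ψ (γ • g)`, so this is the contragradient orbit.
  have hrange : (⇑) '' MulAction.orbit Γᵈᵐᵃ ϑ =
      Set.range (fun γ : Γ => fun g : G => ϑ (γ⁻¹ • g)) := by
    rw [MulAction.orbit, ← Set.range_comp]
    exact (((Equiv.inv Γ).trans DomMulAct.mk).surjective.range_comp
      (DFunLike.coe ∘ fun δ : Γᵈᵐᵃ => δ • ϑ)).symm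
  have horbit : (MulAction.orbit Γᵈᵐᵃ ϑ).Finite :=
    Set.Finite.of_finite_image (hrange ▸ hfin) DFunLike.coe_injective.injOn
  set f : G → ℂ := fun g => ∑ ψ ∈ horbit.toFinset, ψ g
  have hf : Continuous f := by
    refine continuous_finsetSum _ fun ψ hψ => ?_
    obtain ⟨δ, rfl⟩ := horbit.mem_toFinset.1 hψ
    exact hϑ.comp (hcont _)
  have hfinv : ∀ (γ : Γ) (g : G), f (γ • g) = f g := fun γ g => by
    simpa [f] using MulAction.sum_orbit_smul horbit (fun ψ => ψ g) (DomMulAct.mk γ)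
  have hone : (1 : G →* ℂ) ∉ horbit.toFinset := by
    rw [Set.Finite.mem_toFinset, MulAction.mem_orbit_symm]
    rintro ⟨δ, hδ : δ • (1 : G →* ℂ) = ϑ⟩
    obtain ⟨g, hg⟩ := hnt
    exact hg (by rw [← hδ, smul_one]; rfl)
  have hϑ_mem : ϑ ∈ horbit.toFinset := horbit.mem_toFinset.2 (MulAction.mem_orbit_self ϑ)
  refine MonoidHom.sum_ne_const ⟨ϑ, hϑ_mem⟩ hone (f 1) ?_
  funext g
  exact eq_of_continuous_of_smul_invariant herg hf hfinv g 1

/-- if the Haar measure of a compact abelian group `G` is ergodic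
for the action of a group `Γ` of continuous automorphisms, then every
nontrivial (continuous, unit-circle-valued) character of `G` has an infinite
orbit under the contragradient action `γ·ϑ = ϑ ∘ γ⁻¹`. -/
theorem stmt_8 (G : Type*) [CommGroup G] [TopologicalSpace G]
    [IsTopologicalGroup G] [CompactSpace G] [MeasurableSpace G] [BorelSpace G]
    (η : Measure G) [η.IsHaarMeasure] [IsProbabilityMeasure η]
    (Γ : Type*) [Group Γ] [MulDistribMulAction Γ G]
    (hcont : ∀ γ : Γ, Continuous (fun g : G => γ • g))
    (herg : ∀ B : Set G, MeasurableSet B →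
      (∀ γ : Γ, (fun g : G => γ • g) ⁻¹' B = B) → η B = 0 ∨ η B = 1)
    (ϑ : G →* ℂ) (hϑ : Continuous ϑ) (hnorm : ∀ g : G, ‖ϑ g‖ = 1)
    (hnt : ∃ g : G, ϑ g ≠ 1) :
    (Set.range (fun γ : Γ => fun g : G => ϑ (γ⁻¹ • g))).Infinite :=
  stmt_8_general G η Γ hcont herg ϑ hϑ hnt
end

section
/- Let k be an infinite field, n ≥ 2, G = U_n(k) = 1 + 𝔲_n(k), and Γ = G × G acting on 𝔲_n(k) by (g,h)·a = gah⁻¹. Then the set of elements a ∈ 𝔲_n(k) with finite Γ-orbit is exactly k·e_{1,n}; equivalently, the subgroup G_fsc of elements lying in finite superclasses equals 1 + k·e_{1,n} = Z(U_n(k)). -/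
/-! Left multiplication by the unitriangular transvection `1 + t e_{i-1,i}` adds `t` times row `i`
to row `i - 1`; right multiplication by `1 + t e_{j,j+1}` adds `t` times column `j` to column
`j + 1`. So a nonzero entry `a_{i,j}` with `i ≠ 1` or `j ≠ n` yields an orbit point for every
`t ∈ k`, pairwise distinct, and the orbit is infinite. Conversely the first column of a
unitriangular `g` and the last row of a unitriangular `h` are those of the identity, so
`g (α e_{1,n}) h⁻¹ = α e_{1,n}`. -/

/-- A matrix is unitriangular: ones on the diagonal, zeroes below it. -/
def IsUnitriangular {k : Type*} [Field k] {n : ℕ}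
    (g : Matrix (Fin n) (Fin n) k) : Prop :=
  (∀ i, g i i = 1) ∧ ∀ i j : Fin n, (j : ℕ) < (i : ℕ) → g i j = 0

open Matrix

section Transvection

variable {R ι : Type*} [CommRing R] [Fintype ι] [DecidableEq ι] {i j : ι}

lemma inv_transvection (hij : i ≠ j) (c : R) :
    (transvection i j c)⁻¹ = transvection i j (-c) :=
  inv_eq_right_inv <| by rw [transvection_mul_transvection_same _ _ hij, add_neg_cancel,
    transvection_zero]

variable [IsDomain R]

lemma injective_transvection_mul {m : Type*} {a : Matrix ι m R} {b : m} (hab : a j b ≠ 0) :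
    Function.Injective fun c : R => transvection i j c * a := fun c d hcd => by
  have := congrFun (congrFun hcd i) b
  simp only [transvection_mul_apply_same, add_right_inj] at this
  exact mul_right_cancel₀ hab this

lemma injective_mul_transvection {m : Type*} {a : Matrix m ι R} {b : m} (hab : a b i ≠ 0) :
    Function.Injective fun c : R => a * transvection i j c := fun c d hcd => by
  have := congrFun (congrFun hcd b) j
  simp only [mul_transvection_apply_same, add_right_inj] at this
  exact mul_right_cancel₀ hab this

end Transvection

section Unitriangular

variable {k : Type*} [Field k] {n : ℕ}

def unitriangularOrbit (a : Matrix (Fin n) (Fin n) k) : Set (Matrix (Fin n) (Fin n) k) :=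
  {x | ∃ g h : Matrix (Fin n) (Fin n) k,
    IsUnitriangular g ∧ IsUnitriangular h ∧ x = g * a * h⁻¹}

lemma isUnitriangular_one : IsUnitriangular (1 : Matrix (Fin n) (Fin n) k) :=
  ⟨fun _ => one_apply_eq _, fun _ _ hji => one_apply_ne (Fin.ne_of_val_ne hji.ne')⟩

lemma isUnitriangular_transvection {i j : Fin n} (hij : i < j) (c : k) :
    IsUnitriangular (transvection i j c) := by
  refine ⟨fun l => ?_, fun l m hml => ?_⟩
  · have : ¬(i = l ∧ j = l) := by rintro ⟨rfl, rfl⟩; exact lt_irrefl _ hij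
    simp [transvection, single_apply_of_ne (h := this)]
  · have hlm : l ≠ m := Fin.ne_of_val_ne hml.ne'
    have : ¬(i = l ∧ j = m) := by rintro ⟨rfl, rfl⟩; exact lt_asymm hij hml
    simp [transvection, one_apply_ne hlm, single_apply_of_ne (h := this)]

lemma IsUnitriangular.det_eq_one {g : Matrix (Fin n) (Fin n) k} (hg : IsUnitriangular g) :
    g.det = 1 := by
  rw [det_of_isUpperTriangular fun i j hij => hg.2 i j hij]
  simp [hg.1]

lemma IsUnitriangular.mul_single_of_coe_eq_zero {g : Matrix (Fin n) (Fin n) k}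
    (hg : IsUnitriangular g) {z : Fin n} (hz : (z : ℕ) = 0) (q : Fin n) (c : k) :
    g * single z q c = single z q c := by
  ext i j
  obtain rfl | hj := eq_or_ne j q
  · obtain rfl | hi := eq_or_ne i z
    · simp [hg.1]
    · rw [mul_single_apply_same, hg.2 i z (by have := Fin.val_ne_of_ne hi; omega), zero_mul,
        single_apply_of_row_ne hi.symm]
  · rw [mul_single_apply_of_ne _ _ _ _ _ hj, single_apply_of_col_ne _ _ hj.symm]

lemma IsUnitriangular.single_mul_of_coe_eq_sub_one {h : Matrix (Fin n) (Fin n) k}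
    (hh : IsUnitriangular h) {w : Fin n} (hw : (w : ℕ) = n - 1) (p : Fin n) (c : k) :
    single p w c * h = single p w c := by
  ext i j
  obtain rfl | hi := eq_or_ne i p
  · obtain rfl | hj := eq_or_ne j w
    · simp [hh.1]
    · rw [single_mul_apply_same, hh.2 w j (by have := Fin.val_ne_of_ne hj; omega), mul_zero,
        single_apply_of_col_ne _ _ hj.symm]
  · rw [single_mul_apply_of_ne _ _ _ _ _ hi, single_apply_of_row_ne hi.symm]

lemma IsUnitriangular.single_mul_inv_of_coe_eq_sub_one {h : Matrix (Fin n) (Fin n) k}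
    (hh : IsUnitriangular h) {w : Fin n} (hw : (w : ℕ) = n - 1) (p : Fin n) (c : k) :
    single p w c * h⁻¹ = single p w c := by
  conv_lhs => rw [← hh.single_mul_of_coe_eq_sub_one hw p c]
  rw [Matrix.mul_assoc, mul_nonsing_inv _ (by simp [hh.det_eq_one]), Matrix.mul_one]

lemma unitriangularOrbit_smul_single_eq_singleton {z w : Fin n} (hz : (z : ℕ) = 0)
    (hw : (w : ℕ) = n - 1) (α : k) :
    unitriangularOrbit (α • single z w (1 : k)) = {α • single z w (1 : k)} := by
  refine Set.eq_singleton_iff_unique_mem.2 ⟨⟨1, 1, isUnitriangular_one, isUnitriangular_one,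
    by simp⟩, ?_⟩
  rintro _ ⟨g, h, hg, hh, rfl⟩
  rw [smul_single, smul_eq_mul, mul_one, hg.mul_single_of_coe_eq_zero hz,
    hh.single_mul_inv_of_coe_eq_sub_one hw]

lemma transvection_mul_mem_unitriangularOrbit {i j : Fin n} (hij : i < j) (c : k)
    (a : Matrix (Fin n) (Fin n) k) : transvection i j c * a ∈ unitriangularOrbit a :=
  ⟨transvection i j c, 1, isUnitriangular_transvection hij c, isUnitriangular_one, by simp⟩

lemma mul_transvection_mem_unitriangularOrbit {i j : Fin n} (hij : i < j) (c : k)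
    (a : Matrix (Fin n) (Fin n) k) : a * transvection i j c ∈ unitriangularOrbit a :=
  ⟨1, transvection i j (-c), isUnitriangular_one, isUnitriangular_transvection hij (-c), by
    rw [inv_transvection hij.ne, neg_neg, Matrix.one_mul]⟩

variable [Infinite k] {a : Matrix (Fin n) (Fin n) k} {i j : Fin n}

lemma unitriangularOrbit_infinite_of_row_ne_first (hij : a i j ≠ 0) (hi : (i : ℕ) ≠ 0) :
    (unitriangularOrbit a).Infinite :=
  Set.infinite_of_injective_forall_mem (injective_transvection_mul (i := ⟨i - 1, by omega⟩) hij)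
    fun c => transvection_mul_mem_unitriangularOrbit
      (Fin.lt_def.2 (show (i : ℕ) - 1 < i by omega)) c a

lemma unitriangularOrbit_infinite_of_col_ne_last (hij : a i j ≠ 0) (hj : (j : ℕ) ≠ n - 1) :
    (unitriangularOrbit a).Infinite :=
  Set.infinite_of_injective_forall_mem (injective_mul_transvection (j := ⟨j + 1, by omega⟩) hij)
    fun c => mul_transvection_mem_unitriangularOrbit (Fin.lt_def.2 (Nat.lt_succ_self j)) c a

lemma eq_smul_single_of_unitriangularOrbit_finite (hfin : (unitriangularOrbit a).Finite)
    {z w : Fin n} (hz : (z : ℕ) = 0) (hw : (w : ℕ) = n - 1) :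
    a = a z w • single z w (1 : k) := by
  ext i j
  by_cases hij : i = z ∧ j = w
  · obtain ⟨rfl, rfl⟩ := hij
    simp
  · rw [Matrix.smul_apply, single_apply_of_ne (h := fun h => hij ⟨h.1.symm, h.2.symm⟩),
      smul_zero]
    by_contra hne
    rcases not_and_or.1 hij with hi | hj
    · exact unitriangularOrbit_infinite_of_row_ne_first hne (by omega) hfin
    · exact unitriangularOrbit_infinite_of_col_ne_last hne (by omega) hfin

end Unitriangular

/-- over an infinite field `k`, a strictly upper triangular
matrix `a` has finite orbit `{g a h⁻¹ : g, h ∈ Uₙ(k)}` if and only if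
`a ∈ k·e₁ₙ`; equivalently `G_fsc = 1 + k·e₁ₙ = Z(Uₙ(k))`. -/
theorem stmt_19 (k : Type*) [Field k] [Infinite k] (n : ℕ) (hn : 2 ≤ n)
    (a : Matrix (Fin n) (Fin n) k) :
    {x : Matrix (Fin n) (Fin n) k | ∃ g h : Matrix (Fin n) (Fin n) k,
        IsUnitriangular g ∧ IsUnitriangular h ∧ x = g * a * h⁻¹}.Finite ↔
      ∃ α : k, a = α • Matrix.single
        (⟨0, by omega⟩ : Fin n) (⟨n - 1, by omega⟩ : Fin n) (1 : k) := by
  change (unitriangularOrbit a).Finite ↔ _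
  constructor
  · intro hfin
    exact ⟨_, eq_smul_single_of_unitriangularOrbit_finite hfin rfl rfl⟩
  · rintro ⟨α, rfl⟩
    rw [unitriangularOrbit_smul_single_eq_singleton rfl rfl]
    exact Set.finite_singleton _
end
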